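/- For every function f : [n]^d → {0,1}, ε_f ≤ Δ(f, [d] ∘ f) ≤ 2 ε_f, where [d] ∘ f is the function obtained by applying the sort operator in all d dimensions in increasing index order, Δ denotes the fraction of points where two functions differ, and ε_f is the distance of f to monotonicity. -/

import Mathlib

open scoped Classical

noncomputable section

/-- The hypergrid `[n]^d`. -/
abbrev Grid (n d : ℕ) := Fin d → Fin n

/-- A Boolean function on the hypergrid is monotone if `x ⪯ y` implies `f x ≤ f y`. -/
def IsMono {n d : ℕ} (f : Grid n d → Bool) : Prop :=
  ∀ x y : Grid n d, (∀ i, x i ≤ y i) → f x ≤ f y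

/-- Hamming distance: the fraction of points where `f` and `g` differ. -/
def hamDist {n d : ℕ} (f g : Grid n d → Bool) : ℝ :=
  ((Finset.univ.filter (fun x : Grid n d => f x ≠ g x)).card : ℝ) / (n : ℝ) ^ d

/-- Distance to monotonicity: the infimum of Hamming distances to monotone functions. -/
def epsMono {n d : ℕ} (f : Grid n d → Bool) : ℝ :=
  sInf {r : ℝ | ∃ g : Grid n d → Bool, IsMono g ∧ hamDist f g = r}

/-- The sort operator along dimension `i`. -/
def sortDim {n d : ℕ} (i : Fin d) (f : Grid n d → Bool) : Grid n d → Bool :=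
  fun x => decide
    (n - ((Finset.univ.filter (fun c : Fin n => f (Function.update x i c) = true)).card)
      ≤ (x i : ℕ))

/-- Sorting along an ordered list of dimensions `L = (i₁, …, i_k)`:
`L ∘ f = sort_{i_k}(⋯(sort_{i₁} f)⋯)`. -/
def sortList {n d : ℕ} (L : List (Fin d)) (f : Grid n d → Bool) : Grid n d → Bool :=
  L.foldl (fun g i => sortDim i g) f

/-! Sorting one line is 1-Lipschitz for the Hamming distance: two sorted lines differ exactly
on the gap between their numbers of ones, and that gap is at most the distance of the
unsorted lines. Hence `sort_i` is 1-Lipschitz on the grid; it also fixes monotone functions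
and keeps monotonicity along the other coordinates, so `[d] ∘ f` is monotone (the lower
bound). For monotone `g`, `Δ(g, [d] ∘ f) = Δ([d] ∘ g, [d] ∘ f) ≤ Δ(g, f)`, and the triangle
inequality gives `Δ(f, [d] ∘ f) ≤ 2 Δ(f, g)`. -/

open Finset Function

section SortLine

variable {n : ℕ}

def numOnes (h : Fin n → Bool) : ℕ := #{b | h b = true}

def sortLine (h : Fin n → Bool) : Fin n → Bool := fun a => decide (n - numOnes h ≤ a)

theorem numOnes_le (h : Fin n → Bool) : numOnes h ≤ n :=
  (card_le_univ _).trans_eq (Fintype.card_fin n)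

theorem numOnes_mono {h h' : Fin n → Bool} (hle : h ≤ h') : numOnes h ≤ numOnes h' :=
  card_le_card <| monotone_filter_right _ fun b _ hb => Bool.le_iff_imp.1 (hle b) hb

theorem numOnes_le_add_hammingDist (h h' : Fin n → Bool) :
    numOnes h' ≤ numOnes h + hammingDist h h' := by
  refine (card_le_card fun b hb => ?_).trans (card_union_le _ _)
  by_cases hb' : h b = true <;> simp_all

theorem hammingDist_eq_numOnes_sub {h h' : Fin n → Bool} (hle : h ≤ h') :
    hammingDist h h' = numOnes h' - numOnes h := by
  rw [numOnes, numOnes, ← card_sdiff_of_subset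
    (monotone_filter_right _ fun b _ hb => Bool.le_iff_imp.1 (hle b) hb), hammingDist]
  congr 1
  ext b
  have := hle b
  cases hb : h b <;> cases hb' : h' b <;> simp_all [Bool.le_iff_imp]

theorem numOnes_sortLine (h : Fin n → Bool) : numOnes (sortLine h) = numOnes h := by
  have hcompl : ({a | n - numOnes h ≤ (a : ℕ)} : Finset (Fin n))
      = ({a | (a : ℕ) < n - numOnes h} : Finset (Fin n))ᶜ := by
    ext a; simp
  have := numOnes_le h
  change #{a : Fin n | decide (n - numOnes h ≤ (a : ℕ)) = true} = numOnes h
  simp only [decide_eq_true_eq]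
  rw [hcompl, card_compl, Fintype.card_fin, Fin.card_filter_val_lt]
  omega

theorem sortLine_le_sortLine {h h' : Fin n → Bool} (hc : numOnes h ≤ numOnes h') :
    sortLine h ≤ sortLine h' :=
  fun _ => Bool.le_iff_imp.2 fun hle => by
    simp only [sortLine, decide_eq_true_eq] at hle ⊢
    omega

theorem monotone_sortLine (h : Fin n → Bool) : Monotone (sortLine h) :=
  fun a b hab => Bool.le_iff_imp.2 fun hle => by
    simp only [sortLine, decide_eq_true_eq] at hle ⊢
    exact hle.trans hab

theorem sortLine_eq_self {h : Fin n → Bool} (hh : Monotone h) : sortLine h = h := by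
  funext a
  cases ha : h a with
  | true =>
    have hsub : Ici a ⊆ ({b | h b = true} : Finset (Fin n)) := fun b hb =>
      mem_filter.2 ⟨mem_univ b, Bool.le_iff_imp.1 (hh (mem_Ici.1 hb)) ha⟩
    have : n - a ≤ numOnes h := (Fin.card_Ici a).symm.trans_le (card_le_card hsub)
    exact decide_eq_true (by omega)
  | false =>
    have hsub : ({b | h b = true} : Finset (Fin n)) ⊆ Ioi a := fun b hb =>
      mem_Ioi.2 <| lt_of_not_ge fun hba =>
        absurd (Bool.le_iff_imp.1 (hh hba) (mem_filter.1 hb).2) (by simp [ha])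
    have : numOnes h ≤ n - 1 - a := (card_le_card hsub).trans_eq (Fin.card_Ioi a)
    exact decide_eq_false (by omega)

theorem hammingDist_sortLine_le (h h' : Fin n → Bool) :
    hammingDist (sortLine h) (sortLine h') ≤ hammingDist h h' := by
  wlog hc : numOnes h ≤ numOnes h' generalizing h h'
  · rw [hammingDist_comm, hammingDist_comm h]
    exact this h' h (le_of_not_ge hc)
  rw [hammingDist_eq_numOnes_sub (sortLine_le_sortLine hc), numOnes_sortLine, numOnes_sortLine]
  have := numOnes_le_add_hammingDist h h'
  omega

end SortLine

theorem monotone_of_monotone_update {ι α β : Type*} [Fintype ι] [DecidableEq ι] [Preorder α]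
    [Preorder β] {f : (ι → α) → β} (hf : ∀ i x, Monotone fun a => f (update x i a)) :
    Monotone f := by
  intro x y hxy
  have key : ∀ s : Finset ι, f x ≤ f (s.piecewise y x) := by
    intro s
    induction s using Finset.induction_on with
    | empty => simp
    | insert i s hi ih =>
      refine ih.trans ?_
      rw [piecewise_insert]
      convert hf i (s.piecewise y x) (hxy i) using 2
      rw [← piecewise_eq_of_notMem s y x hi, update_eq_self]
  simpa using key univ

theorem hammingDist_comp_equiv {α β γ : Type*} [Fintype α] [Fintype β] [DecidableEq γ]
    (e : α ≃ β) (f g : β → γ) : hammingDist (f ∘ e) (g ∘ e) = hammingDist f g := by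
  simp only [hammingDist, Function.comp_apply]
  exact card_equiv e (by simp)

theorem hammingDist_prod_eq_sum {α β γ : Type*} [Fintype α] [Fintype β] [DecidableEq γ]
    (f g : α × β → γ) :
    hammingDist f g = ∑ b, hammingDist (fun a => f (a, b)) (fun a => g (a, b)) := by
  simp only [hammingDist, card_filter, Fintype.sum_prod_type_right]

section Grid

variable {n d : ℕ}

def gridLine (f : Grid n d → Bool) (i : Fin d) (x : Grid n d) : Fin n → Bool :=
  fun c => f (update x i c)

def MonotoneAlong (i : Fin d) (f : Grid n d → Bool) : Prop :=
  ∀ x, Monotone (gridLine f i x)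

theorem isMono_iff_monotone {f : Grid n d → Bool} : IsMono f ↔ Monotone f := Iff.rfl

theorem sortDim_apply (i : Fin d) (f : Grid n d → Bool) (x : Grid n d) :
    sortDim i f x = sortLine (gridLine f i x) (x i) := rfl

theorem gridLine_update_self (f : Grid n d → Bool) (i : Fin d) (x : Grid n d) (c : Fin n) :
    gridLine f i (update x i c) = gridLine f i x := by
  funext c'
  simp only [gridLine, update_idem]

theorem gridLine_sortDim (i : Fin d) (f : Grid n d → Bool) (x : Grid n d) :
    gridLine (sortDim i f) i x = sortLine (gridLine f i x) := by
  funext c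
  rw [gridLine, sortDim_apply, gridLine_update_self, update_self]

theorem monotoneAlong_sortDim_self (i : Fin d) (f : Grid n d → Bool) :
    MonotoneAlong i (sortDim i f) := fun x => by
  rw [gridLine_sortDim]
  exact monotone_sortLine _

theorem MonotoneAlong.sortDim {i j : Fin d} {f : Grid n d → Bool} (hf : MonotoneAlong j f) :
    MonotoneAlong j (sortDim i f) := by
  rcases eq_or_ne j i with rfl | hji
  · exact monotoneAlong_sortDim_self j f
  intro x a b hab
  have hlines : gridLine f i (update x j a) ≤ gridLine f i (update x j b) := fun c => by
    simpa only [gridLine, update_comm hji] using hf (update x i c) hab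
  simpa only [gridLine, sortDim_apply, update_of_ne hji.symm] using
    sortLine_le_sortLine (numOnes_mono hlines) (x i)

theorem IsMono.monotoneAlong {f : Grid n d → Bool} (hf : IsMono f) (i : Fin d) :
    MonotoneAlong i f :=
  fun _ => (isMono_iff_monotone.1 hf).comp update_mono

theorem isMono_of_monotoneAlong {f : Grid n d → Bool} (hf : ∀ i, MonotoneAlong i f) : IsMono f :=
  isMono_iff_monotone.2 <| monotone_of_monotone_update fun i x => hf i x

theorem sortDim_eq_self {i : Fin d} {f : Grid n d → Bool} (hf : MonotoneAlong i f) :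
    sortDim i f = f := by
  funext x
  rw [sortDim_apply, sortLine_eq_self (hf x), gridLine, update_eq_self]

theorem hammingDist_sortDim_le (i : Fin d) (f g : Grid n d → Bool) :
    hammingDist (sortDim i f) (sortDim i g) ≤ hammingDist f g := by
  set e := Equiv.funSplitAt i (Fin n)
  have hline : ∀ (F : Grid n d → Bool) a z,
      sortDim i F (e.symm (a, z)) = sortLine (fun c => F (e.symm (c, z))) a := by
    intro F a z
    rw [sortDim_apply]
    congr 1
    · funext c
      refine congrArg F (funext fun j => ?_)
      by_cases hj : j = i
      · subst hj; simp [e]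
      · simp [e, hj]
    · simp [e]
  rw [← hammingDist_comp_equiv e.symm, ← hammingDist_comp_equiv e.symm f g,
    hammingDist_prod_eq_sum, hammingDist_prod_eq_sum]
  refine sum_le_sum fun z _ => ?_
  simp only [comp_apply, hline]
  exact hammingDist_sortLine_le _ _

end Grid

section SortList

variable {n d : ℕ}

theorem sortList_cons (i : Fin d) (L : List (Fin d)) (f : Grid n d → Bool) :
    sortList (i :: L) f = sortList L (sortDim i f) := rfl

theorem monotoneAlong_sortList {j : Fin d} {L : List (Fin d)} {f : Grid n d → Bool}
    (hj : j ∈ L ∨ MonotoneAlong j f) : MonotoneAlong j (sortList L f) := by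
  induction L generalizing f with
  | nil => exact hj.resolve_left List.not_mem_nil
  | cons i L ih =>
    refine ih ?_
    rcases hj with hj | hj
    · rcases List.mem_cons.1 hj with rfl | hj
      · exact Or.inr (monotoneAlong_sortDim_self j f)
      · exact Or.inl hj
    · exact Or.inr hj.sortDim

theorem isMono_sortList_finRange (f : Grid n d → Bool) :
    IsMono (sortList (List.finRange d) f) :=
  isMono_of_monotoneAlong fun j => monotoneAlong_sortList (Or.inl (List.mem_finRange j))

theorem sortList_eq_self (L : List (Fin d)) {g : Grid n d → Bool} (hg : IsMono g) :
    sortList L g = g := by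
  induction L with
  | nil => rfl
  | cons i L ih => rw [sortList_cons, sortDim_eq_self (hg.monotoneAlong i), ih]

theorem hammingDist_sortList_le (L : List (Fin d)) (f g : Grid n d → Bool) :
    hammingDist (sortList L f) (sortList L g) ≤ hammingDist f g := by
  induction L generalizing f g with
  | nil => exact le_rfl
  | cons i L ih => exact (ih _ _).trans (hammingDist_sortDim_le i f g)

theorem hammingDist_sortList_le_two_mul (L : List (Fin d)) (f : Grid n d → Bool)
    {g : Grid n d → Bool} (hg : IsMono g) :
    hammingDist f (sortList L f) ≤ 2 * hammingDist f g :=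
  calc hammingDist f (sortList L f)
      ≤ hammingDist f g + hammingDist (sortList L g) (sortList L f) := by
        rw [sortList_eq_self L hg]; exact hammingDist_triangle f g _
    _ ≤ hammingDist f g + hammingDist g f := by gcongr; exact hammingDist_sortList_le L g f
    _ = 2 * hammingDist f g := by rw [hammingDist_comm g f, two_mul]

end SortList

section Distance

variable {n d : ℕ}

theorem hamDist_eq (f g : Grid n d → Bool) : hamDist f g = hammingDist f g / (n : ℝ) ^ d := rfl

theorem epsMono_le_hamDist (f : Grid n d → Bool) {g : Grid n d → Bool} (hg : IsMono g) :
    epsMono f ≤ hamDist f g :=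
  csInf_le ⟨0, by rintro r ⟨g, -, rfl⟩; rw [hamDist_eq]; positivity⟩ ⟨g, hg, rfl⟩

theorem le_epsMono {f : Grid n d → Bool} {r : ℝ} (h : ∀ g, IsMono g → r ≤ hamDist f g) :
    r ≤ epsMono f :=
  le_csInf ⟨_, fun _ => false, fun _ _ _ => le_rfl, rfl⟩ <| by
    rintro _ ⟨g, hg, rfl⟩
    exact h g hg

theorem hamDist_sortList_le_two_mul (L : List (Fin d)) (f : Grid n d → Bool)
    {g : Grid n d → Bool} (hg : IsMono g) :
    hamDist f (sortList L f) ≤ 2 * hamDist f g := by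
  rw [hamDist_eq, hamDist_eq, ← mul_div_assoc]
  gcongr
  exact_mod_cast hammingDist_sortList_le_two_mul L f hg

end Distance

/-- `ε_f ≤ Δ(f, [d] ∘ f) ≤ 2 ε_f`, where `[d] ∘ f` sorts all `d`
dimensions in increasing index order. -/
theorem dist_to_full_sort_approximates_eps {n d : ℕ} (f : Grid n d → Bool) :
    epsMono f ≤ hamDist f (sortList (List.finRange d) f) ∧
      hamDist f (sortList (List.finRange d) f) ≤ 2 * epsMono f := by
  refine ⟨epsMono_le_hamDist f (isMono_sortList_finRange f), ?_⟩
  have : hamDist f (sortList (List.finRange d) f) / 2 ≤ epsMono f :=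
    le_epsMono fun g hg => by
      linarith [hamDist_sortList_le_two_mul (List.finRange d) f hg]
  linarith
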